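/- arXiv:2411.09154 — 2 statements merged into one kernel-verified Lean document; each statement's English description precedes it below -/
import Mathlib

section
/- Let N, K be positive integers. For each k ∈ {1,…,K} let H_k be an N×N Hermitian positive semidefinite complex matrix (the lifted channel matrix h_k h_kᴴ of ground terminal k), let σ_k > 0 be the noise standard deviation, R_k^th ∈ ℝ the rate threshold, and c_k ≥ 0 the common-stream rate allocation. Suppose Ŵ_c, Ŵ_0 and Ŵ_{p,1},…,Ŵ_{p,K} are N×N Hermitian positive semidefinite complex matrices satisfying: (i) the power constraint Re Tr(Ŵ_c) + Σ_{k=1}^K Re Tr(Ŵ_{p,k}) + Re Tr(Ŵ_0) ≤ P_max; (ii) for every k, Σ_{j=1}^K c_j ≤ log₂(1 + Re Tr(H_k Ŵ_c)/(Σ_{i=1}^K Re Tr(H_k Ŵ_{p,i}) + Re Tr(H_k Ŵ_0) + σ_k²)); (iii) for every k, c_k + log₂(1 + Re Tr(H_k Ŵ_{p,k})/(Σ_{j≠k} Re Tr(H_k Ŵ_{p,j}) + Re Tr(H_k Ŵ_0) + σ_k²)) ≥ R_k^th. Let ζ_c ≥ 0 and ζ_1,…,ζ_K ≥ 0 with ζ_c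 + Σ_{k=1}^K ζ_k = 1, and define W̄_c = Ŵ_c + ζ_c Ŵ_0, W̄_{p,k} = Ŵ_{p,k} + ζ_k Ŵ_0, W̄_0 = 0. Then W̄_c, W̄_0, W̄_{p,1},…,W̄_{p,K} are Hermitian positive semidefinite, satisfy constraints (i), (ii), (iii), and moreover W̄_c + Σ_{k=1}^K W̄_{p,k} + W̄_0 = Ŵ_c + Σ_{k=1}^K Ŵ_{p,k} + Ŵ_0 (so any objective depending only on this sum, such as the sensing SINR, is unchanged). -/
/-!
Moving the sensing covariance `Ŵ_0` onto the communication covariances leaves the total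
transmit covariance, hence the transmit power, unchanged. For each rate constraint, the
useful signal power `Re Tr(H_k W)` can only grow, while the interference loses the term
`Re Tr(H_k Ŵ_0)` and gains back at most that amount, since the weights it receives sum to at
most one. Both quantities are nonnegative because `Re Tr(AB) ≥ 0` for positive semidefinite
`A`, `B`, so every SINR, and with it every rate, can only increase.
-/

open Matrix
open scoped ComplexOrder

open scoped MatrixOrder in
theorem Matrix.PosSemidef.trace_mul_nonneg {𝕜 n : Type*} [RCLike 𝕜] [Fintype n]
    {A B : Matrix n n 𝕜} (hA : A.PosSemidef) (hB : B.PosSemidef) : 0 ≤ (A * B).trace := by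
  classical
  obtain ⟨X, rfl⟩ := CStarAlgebra.nonneg_iff_eq_star_mul_self.mp hA.nonneg
  rw [star_eq_conjTranspose, Matrix.mul_assoc, trace_mul_comm]
  exact (hB.mul_mul_conjTranspose_same X).trace_nonneg

theorem Matrix.PosSemidef.re_trace_mul_nonneg {n : Type*} [Fintype n] {A B : Matrix n n ℂ}
    (hA : A.PosSemidef) (hB : B.PosSemidef) : 0 ≤ (A * B).trace.re :=
  (Complex.nonneg_iff.mp (hA.trace_mul_nonneg hB)).1

theorem Matrix.re_trace_mul_add_ofReal_smul {n : Type*} [Fintype n]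
    (A W V : Matrix n n ℂ) (r : ℝ) :
    (A * (W + (r : ℂ) • V)).trace.re = (A * W).trace.re + r * (A * V).trace.re := by
  simp only [Matrix.mul_add, Matrix.mul_smul, trace_add, trace_smul, smul_eq_mul,
    Complex.add_re, Complex.re_ofReal_mul]

theorem Real.logb_one_add_div_le_logb_one_add_div {b a a' d d' : ℝ} (hb : 1 < b)
    (ha : 0 ≤ a) (haa' : a ≤ a') (hd' : 0 < d') (hd'd : d' ≤ d) :
    logb b (1 + a / d) ≤ logb b (1 + a' / d') := by
  have hd : 0 < d := hd'.trans_le hd'd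
  exact logb_le_logb_of_le hb (by positivity) (by gcongr; exact ha.trans haa')

theorem add_smul_add_sum_add_smul_of_add_sum_eq_one {R M ι : Type*} [Semiring R]
    [AddCommMonoid M] [Module R M] (s : Finset ι) (x y : M) (f : ι → M) {a : R} {b : ι → R}
    (h : a + ∑ i ∈ s, b i = 1) :
    x + a • y + ∑ i ∈ s, (f i + b i • y) = x + ∑ i ∈ s, f i + y := by
  conv_rhs => rw [← one_smul R y, ← h, add_smul, Finset.sum_smul]
  rw [Finset.sum_add_distrib]
  abel

theorem logb_sinr_le_of_redistribute {n ι : Type*} [Fintype n] {H W V : Matrix n n ℂ}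
    {Wi : ι → Matrix n n ℂ} (s : Finset ι) {θ σ : ℝ} {ζ : ι → ℝ}
    (hH : H.PosSemidef) (hW : W.PosSemidef) (hV : V.PosSemidef)
    (hWi : ∀ i ∈ s, (Wi i).PosSemidef) (hθ : 0 ≤ θ) (hζ : ∀ i ∈ s, 0 ≤ ζ i)
    (hζ1 : ∑ i ∈ s, ζ i ≤ 1) (hσ : σ ≠ 0) :
    Real.logb 2 (1 + (H * W).trace.re /
        (∑ i ∈ s, (H * Wi i).trace.re + (H * V).trace.re + σ ^ 2)) ≤
      Real.logb 2 (1 + (H * (W + (θ : ℂ) • V)).trace.re /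
        (∑ i ∈ s, (H * (Wi i + (ζ i : ℂ) • V)).trace.re + σ ^ 2)) := by
  simp only [re_trace_mul_add_ofReal_smul, Finset.sum_add_distrib, ← Finset.sum_mul]
  have ht : 0 ≤ (H * V).trace.re := hH.re_trace_mul_nonneg hV
  have hp : 0 ≤ ∑ i ∈ s, (H * Wi i).trace.re :=
    Finset.sum_nonneg fun i hi => hH.re_trace_mul_nonneg (hWi i hi)
  have hζ0 : 0 ≤ ∑ i ∈ s, ζ i := Finset.sum_nonneg hζ
  refine Real.logb_one_add_div_le_logb_one_add_div one_lt_two (hH.re_trace_mul_nonneg hW)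
    (le_add_of_nonneg_right (mul_nonneg hθ ht)) (by positivity) ?_
  gcongr
  exact mul_le_of_le_one_left ht hζ1

theorem sensing_waveform_redistribution_general
    (N K : ℕ)
    (Pmax : ℝ)
    (H : Fin K → Matrix (Fin N) (Fin N) ℂ) (hH : ∀ k, (H k).PosSemidef)
    (σ : Fin K → ℝ) (hσ : ∀ k, 0 < σ k)
    (Rth : Fin K → ℝ)
    (c : Fin K → ℝ)
    (Wc W0 : Matrix (Fin N) (Fin N) ℂ)
    (Wp : Fin K → Matrix (Fin N) (Fin N) ℂ)
    (hWc : Wc.PosSemidef) (hW0 : W0.PosSemidef) (hWp : ∀ k, (Wp k).PosSemidef)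
    -- (i) power constraint
    (hpow : Wc.trace.re + ∑ k, (Wp k).trace.re + W0.trace.re ≤ Pmax)
    -- (ii) common-stream rate constraint
    (hcom : ∀ k, ∑ j, c j ≤
      Real.logb 2 (1 + (H k * Wc).trace.re /
        (∑ i, (H k * Wp i).trace.re + (H k * W0).trace.re + σ k ^ 2)))
    -- (iii) private-stream rate constraint
    (hpriv : ∀ k, c k +
      Real.logb 2 (1 + (H k * Wp k).trace.re /
        (∑ j ∈ Finset.univ.erase k, (H k * Wp j).trace.re +
          (H k * W0).trace.re + σ k ^ 2)) ≥ Rth k)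
    (ζc : ℝ) (ζ : Fin K → ℝ)
    (hζc : 0 ≤ ζc) (hζ : ∀ k, 0 ≤ ζ k)
    (hsum : ζc + ∑ k, ζ k = 1) :
    -- the reconstructed matrices are Hermitian positive semidefinite
    (Wc + (ζc : ℂ) • W0).PosSemidef ∧
    (∀ k, (Wp k + (ζ k : ℂ) • W0).PosSemidef) ∧
    (0 : Matrix (Fin N) (Fin N) ℂ).PosSemidef ∧
    -- (i) power constraint still holds
    (Wc + (ζc : ℂ) • W0).trace.re +
      ∑ k, (Wp k + (ζ k : ℂ) • W0).trace.re +
      (0 : Matrix (Fin N) (Fin N) ℂ).trace.re ≤ Pmax ∧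
    -- (ii) common-stream rate constraint still holds
    (∀ k, ∑ j, c j ≤
      Real.logb 2 (1 + (H k * (Wc + (ζc : ℂ) • W0)).trace.re /
        (∑ i, (H k * (Wp i + (ζ i : ℂ) • W0)).trace.re +
          (H k * (0 : Matrix (Fin N) (Fin N) ℂ)).trace.re + σ k ^ 2))) ∧
    -- (iii) private-stream rate constraint still holds
    (∀ k, c k +
      Real.logb 2 (1 + (H k * (Wp k + (ζ k : ℂ) • W0)).trace.re /
        (∑ j ∈ Finset.univ.erase k,
            (H k * (Wp j + (ζ j : ℂ) • W0)).trace.re +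
          (H k * (0 : Matrix (Fin N) (Fin N) ℂ)).trace.re + σ k ^ 2)) ≥
        Rth k) ∧
    -- the total transmit covariance is unchanged
    (Wc + (ζc : ℂ) • W0) + ∑ k, (Wp k + (ζ k : ℂ) • W0) +
        (0 : Matrix (Fin N) (Fin N) ℂ)
      = Wc + ∑ k, Wp k + W0 := by
  have hζ1 (s : Finset (Fin K)) : ∑ k ∈ s, ζ k ≤ 1 := by
    linarith [Finset.sum_le_univ_sum_of_nonneg (s := s) hζ]
  have hQ : Wc + (ζc : ℂ) • W0 + ∑ k, (Wp k + (ζ k : ℂ) • W0) + 0 =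
      Wc + ∑ k, Wp k + W0 := by
    rw [add_zero]
    exact add_smul_add_sum_add_smul_of_add_sum_eq_one _ _ _ _ (by exact_mod_cast hsum)
  refine ⟨hWc.add (hW0.smul (Complex.zero_le_real.mpr hζc)),
    fun k => (hWp k).add (hW0.smul (Complex.zero_le_real.mpr (hζ k))), .zero, ?_,
    fun k => ?_, fun k => ?_, hQ⟩
  · have hQre := congrArg (fun M => M.trace.re) hQ
    simp only [trace_add, trace_sum, Complex.add_re, Complex.re_sum] at hQre ⊢
    linarith
  all_goals simp only [Matrix.mul_zero, trace_zero, Complex.zero_re, add_zero]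
  · exact (hcom k).trans <| logb_sinr_le_of_redistribute _ (hH k) hWc hW0
      (fun i _ => hWp i) hζc (fun i _ => hζ i) (hζ1 _) (hσ k).ne'
  · exact (hpriv k).trans <| add_le_add_right (logb_sinr_le_of_redistribute _ (hH k) (hWp k)
      hW0 (fun i _ => hWp i) (hζ k) (fun i _ => hζ i) (hζ1 _) (hσ k).ne') _

theorem sensing_waveform_redistribution
    (N K : ℕ) (hN : 0 < N) (hK : 0 < K)
    (Pmax : ℝ) (hP : 0 < Pmax)
    (H : Fin K → Matrix (Fin N) (Fin N) ℂ) (hH : ∀ k, (H k).PosSemidef)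
    (σ : Fin K → ℝ) (hσ : ∀ k, 0 < σ k)
    (Rth : Fin K → ℝ)
    (c : Fin K → ℝ) (hc : ∀ k, 0 ≤ c k)
    (Wc W0 : Matrix (Fin N) (Fin N) ℂ)
    (Wp : Fin K → Matrix (Fin N) (Fin N) ℂ)
    (hWc : Wc.PosSemidef) (hW0 : W0.PosSemidef) (hWp : ∀ k, (Wp k).PosSemidef)
    -- (i) power constraint
    (hpow : Wc.trace.re + ∑ k, (Wp k).trace.re + W0.trace.re ≤ Pmax)
    -- (ii) common-stream rate constraint
    (hcom : ∀ k, ∑ j, c j ≤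
      Real.logb 2 (1 + (H k * Wc).trace.re /
        (∑ i, (H k * Wp i).trace.re + (H k * W0).trace.re + σ k ^ 2)))
    -- (iii) private-stream rate constraint
    (hpriv : ∀ k, c k +
      Real.logb 2 (1 + (H k * Wp k).trace.re /
        (∑ j ∈ Finset.univ.erase k, (H k * Wp j).trace.re +
          (H k * W0).trace.re + σ k ^ 2)) ≥ Rth k)
    (ζc : ℝ) (ζ : Fin K → ℝ)
    (hζc : 0 ≤ ζc) (hζ : ∀ k, 0 ≤ ζ k)
    (hsum : ζc + ∑ k, ζ k = 1) :
    -- the reconstructed matrices are Hermitian positive semidefinite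
    (Wc + (ζc : ℂ) • W0).PosSemidef ∧
    (∀ k, (Wp k + (ζ k : ℂ) • W0).PosSemidef) ∧
    (0 : Matrix (Fin N) (Fin N) ℂ).PosSemidef ∧
    -- (i) power constraint still holds
    (Wc + (ζc : ℂ) • W0).trace.re +
      ∑ k, (Wp k + (ζ k : ℂ) • W0).trace.re +
      (0 : Matrix (Fin N) (Fin N) ℂ).trace.re ≤ Pmax ∧
    -- (ii) common-stream rate constraint still holds
    (∀ k, ∑ j, c j ≤
      Real.logb 2 (1 + (H k * (Wc + (ζc : ℂ) • W0)).trace.re /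
        (∑ i, (H k * (Wp i + (ζ i : ℂ) • W0)).trace.re +
          (H k * (0 : Matrix (Fin N) (Fin N) ℂ)).trace.re + σ k ^ 2))) ∧
    -- (iii) private-stream rate constraint still holds
    (∀ k, c k +
      Real.logb 2 (1 + (H k * (Wp k + (ζ k : ℂ) • W0)).trace.re /
        (∑ j ∈ Finset.univ.erase k,
            (H k * (Wp j + (ζ j : ℂ) • W0)).trace.re +
          (H k * (0 : Matrix (Fin N) (Fin N) ℂ)).trace.re + σ k ^ 2)) ≥
        Rth k) ∧
    -- the total transmit covariance is unchanged
    (Wc + (ζc : ℂ) • W0) + ∑ k, (Wp k + (ζ k : ℂ) • W0) +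
        (0 : Matrix (Fin N) (Fin N) ℂ)
      = Wc + ∑ k, Wp k + W0 :=
  sensing_waveform_redistribution_general N K Pmax H hH σ hσ Rth c Wc W0 Wp hWc hW0 hWp hpow hcom
    hpriv ζc ζ hζc hζ hsum
end

section
/- Let S ≥ 0, I ≥ 0, σ² > 0 and c, R ∈ ℝ, and set ρ = 1/σ². Then c + log₂(1 + S/(I + σ²)) ≥ R if and only if there exists b ∈ ℝ such that ρ(S + I) + 1 ≥ 2^b and 2^(b + c − R) ≥ ρ·I + 1. -/
/-!
Statement 6: slack-variable reformulation of the private-rate constraint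
(equations (15)–(16) of the paper).  With private signal power `S`,
interference power `I`, noise power `σ² > 0` and `ρ = 1/σ²`, the constraint
`c + log₂(1 + S/(I + σ²)) ≥ R` is equivalent to the existence of a slack
variable `b` with `ρ(S + I) + 1 ≥ 2^b` and `2^(b + c − R) ≥ ρ·I + 1`.
-/

theorem private_rate_slack_reformulation
    (S I σ2 c R : ℝ) (hS : 0 ≤ S) (hI : 0 ≤ I) (hσ2 : 0 < σ2) :
    c + Real.logb 2 (1 + S / (I + σ2)) ≥ R ↔
      ∃ b : ℝ, (1 / σ2) * (S + I) + 1 ≥ (2 : ℝ) ^ b ∧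
        (2 : ℝ) ^ (b + c - R) ≥ (1 / σ2) * I + 1 := by
  have hIσ : (0:ℝ) < I + σ2 := by linarith
  set A : ℝ := (1 / σ2) * (S + I) + 1 with hA
  set B : ℝ := (1 / σ2) * I + 1 with hB
  have hApos : 0 < A := by rw [hA]; positivity
  have hBpos : 0 < B := by rw [hB]; positivity
  have hAB : 1 + S / (I + σ2) = A / B := by
    rw [hA, hB]
    field_simp
    ring
  have hlog : Real.logb 2 (1 + S / (I + σ2)) = Real.logb 2 A - Real.logb 2 B := by
    rw [hAB, Real.logb_div (ne_of_gt hApos) (ne_of_gt hBpos)]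
  rw [hlog]
  constructor
  · intro h
    refine ⟨Real.logb 2 A, ?_, ?_⟩
    · rw [Real.rpow_logb (by norm_num) (by norm_num) hApos]
    · have h2 : Real.logb 2 B ≤ Real.logb 2 A + c - R := by linarith
      calc B = (2:ℝ) ^ Real.logb 2 B :=
              (Real.rpow_logb (by norm_num) (by norm_num) hBpos).symm
        _ ≤ (2:ℝ) ^ (Real.logb 2 A + c - R) :=
              Real.rpow_le_rpow_left_iff (by norm_num : (1:ℝ) < 2) |>.mpr h2
  · rintro ⟨b, h1, h2⟩
    have hb : b ≤ Real.logb 2 A := by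
      have := Real.logb_le_logb_of_le (by norm_num : (1:ℝ) < 2) (Real.rpow_pos_of_pos (by norm_num) b) h1
      rwa [Real.logb_rpow (by norm_num) (by norm_num)] at this
    have hb2 : Real.logb 2 B ≤ b + c - R := by
      have := Real.logb_le_logb_of_le (by norm_num : (1:ℝ) < 2) hBpos h2
      rwa [Real.logb_rpow (by norm_num) (by norm_num)] at this
    linarith
end
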